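/- Assume ℕA is normal, i.e., ℕA = ℤ^d ∩ ℝ_{≥0}A. Then for every face F ⪯ A: ℕA − ℕF = {α ∈ ℤ^d : h_G(α) ≥ 0 for every facet G of A with G ⪰ F}. -/

import Mathlib

/-!
Common setup: `A` is a `d × n` integer matrix, given by its columns `a : Fin n → Lat d`,
with `ℤA = ℤ^d` (`SpansZ`) and `ℕA` pointed (`Pointed`).  Faces, semigroups, graded
modules, quasidegree sets, the dualizing complex `ω•_{S_A}` and the Ishida complexes
`℧•_F` are formalized below; all cohomology statements are expressed via the
(ℤ^d-)graded components of these complexes.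
-/

namespace GKZ

open scoped Classical

noncomputable section

abbrev Lat (d : ℕ) := Fin d → ℤ
abbrev CS (d : ℕ) := Fin d → ℂ
abbrev Laur (d : ℕ) := AddMonoidAlgebra ℂ (Lat d)

/-- Inclusion ℤ^d ⊆ ℂ^d. -/
def toC {d : ℕ} (α : Lat d) : CS d := fun i => (α i : ℂ)
/-- Inclusion ℤ^d ⊆ ℝ^d. -/
def toR {d : ℕ} (α : Lat d) : Fin d → ℝ := fun i => (α i : ℝ)
/-- The monomial t^α in the Laurent polynomial ring ℂ[ℤ^d]. -/
def mono {d : ℕ} (α : Lat d) : Laur d := AddMonoidAlgebra.single α 1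

variable {d n : ℕ}

/-- The affine semigroup ℕA generated by the columns of `A`. -/
def NA (a : Fin n → Lat d) : AddSubmonoid (Lat d) := AddSubmonoid.closure (Set.range a)

/-- ℕA is pointed: ℕA ∩ (−ℕA) = {0}. -/
def Pointed (a : Fin n → Lat d) : Prop := ∀ x ∈ NA a, -x ∈ NA a → x = 0

/-- ℤA = ℤ^d. -/
def SpansZ (a : Fin n → Lat d) : Prop :=
  AddSubgroup.closure (Set.range a) = (⊤ : AddSubgroup (Lat d))

/-- The real cone ℝ₊F spanned by the columns indexed by `F`. -/
def cone (a : Fin n → Lat d) (F : Set (Fin n)) : Set (Fin d → ℝ) :=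
  { x | ∃ c : Fin n → ℝ, (∀ i, 0 ≤ c i) ∧ (∀ i, i ∉ F → c i = 0) ∧ x = ∑ i, c i • toR (a i) }

/-- `F` is a face of `A`: ℝ₊F is a face of the cone ℝ₊A, and `F` consists of all the
columns of `A` lying on that face. -/
def IsFace (a : Fin n → Lat d) (F : Set (Fin n)) : Prop :=
  (∀ x y, x ∈ cone a Set.univ → y ∈ cone a Set.univ →
      x + y ∈ cone a F → x ∈ cone a F ∧ y ∈ cone a F) ∧
  (∀ i, toR (a i) ∈ cone a F → i ∈ F)

/-- ℕF. -/
def NFace (a : Fin n → Lat d) (F : Set (Fin n)) : AddSubmonoid (Lat d) :=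
  AddSubmonoid.closure (a '' F)

/-- ℤF. -/
def ZFace (a : Fin n → Lat d) (F : Set (Fin n)) : AddSubgroup (Lat d) :=
  AddSubgroup.closure (a '' F)

/-- ℂF ⊆ ℂ^d. -/
def CFace (a : Fin n → Lat d) (F : Set (Fin n)) : Submodule ℂ (CS d) :=
  Submodule.span ℂ (toC '' (a '' F))

/-- d_F, the rank of ℤF. -/
def dimF (a : Fin n → Lat d) (F : Set (Fin n)) : ℕ :=
  Module.finrank ℤ (Submodule.span ℤ (a '' F))

/-- σ_F, the sum of the columns of F. -/
def sigmaF (a : Fin n → Lat d) (F : Set (Fin n)) : Lat d :=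
  ∑ i : Fin n, if i ∈ F then a i else 0

/-- ε_A = a_1 + ⋯ + a_n. -/
def epsA (a : Fin n → Lat d) : Lat d := ∑ i : Fin n, a i

/-- ℕA − ℕF ⊆ ℤ^d. -/
def NAmNF (a : Fin n → Lat d) (F : Set (Fin n)) : Set (Lat d) :=
  {γ | ∃ u ∈ NA a, ∃ v ∈ NFace a F, γ = u - v}

/-- ℕF − ℕA ⊆ ℤ^d. -/
def NFmNA (a : Fin n → Lat d) (F : Set (Fin n)) : Set (Lat d) :=
  {γ | ∃ u ∈ NFace a F, ∃ v ∈ NA a, γ = u - v}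

/-- ℕF − ℕH ⊆ ℤ^d. -/
def NFmNH (a : Fin n → Lat d) (F H : Set (Fin n)) : Set (Lat d) :=
  {γ | ∃ u ∈ NFace a F, ∃ v ∈ NFace a H, γ = u - v}

/-- ℕA is normal: ℕA = ℤ^d ∩ ℝ₊A. -/
def Normal (a : Fin n → Lat d) : Prop :=
  ∀ γ : Lat d, γ ∈ NA a ↔ toR γ ∈ cone a Set.univ

/-- The Zariski closure of a subset of ℂ^d. -/
def zClosure {d : ℕ} (T : Set (CS d)) : Set (CS d) :=
  {x | ∀ p : MvPolynomial (Fin d) ℂ, (∀ y ∈ T, MvPolynomial.eval y p = 0) →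
    MvPolynomial.eval x p = 0}

def IsZClosed {d : ℕ} (Z : Set (CS d)) : Prop := zClosure Z ⊆ Z

/-- Irreducibility of a subset of ℂ^d in the Zariski topology. -/
def ZIrred {d : ℕ} (Z : Set (CS d)) : Prop :=
  Z.Nonempty ∧ ∀ C₁ C₂ : Set (CS d), IsZClosed C₁ → IsZClosed C₂ →
    Z ⊆ C₁ ∪ C₂ → Z ⊆ C₁ ∨ Z ⊆ C₂

/-- Krull (topological) dimension of a subset of ℂ^d with the Zariski topology:
the Krull dimension of the poset of irreducible Zariski-closed subsets contained in it. -/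
def zdim {d : ℕ} (Z : Set (CS d)) : WithBot ℕ∞ :=
  Order.krullDim {C : Set (CS d) // C ⊆ Z ∧ IsZClosed C ∧ ZIrred C}

/-- `Z` is an irreducible component of `W`: a maximal irreducible Zariski-closed subset. -/
def IsIrredComp {d : ℕ} (Z W : Set (CS d)) : Prop :=
  Z ⊆ W ∧ IsZClosed Z ∧ ZIrred Z ∧
    ∀ Z' : Set (CS d), IsZClosed Z' → ZIrred Z' → Z ⊆ Z' → Z' ⊆ W → Z' = Z

/-- The type of faces of `A`. -/
def FaceT (a : Fin n → Lat d) := {G : Set (Fin n) // IsFace a G}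

instance (a : Fin n → Lat d) : Finite (FaceT a) := by
  unfold FaceT; infer_instance

noncomputable instance (a : Fin n → Lat d) : Fintype (FaceT a) := Fintype.ofFinite _

/-- Degree set of the localization M[∂^{−G}] of the monomial module with degree set `E`:
the set E − ℕG. -/
def locE (a : Fin n → Lat d) (E : Set (Lat d)) (G : Set (Fin n)) : Set (Lat d) :=
  {γ | ∃ f ∈ NFace a G, γ + f ∈ E}

/-- Functions supported on a subset, as a ℂ-submodule of the function space. -/
def funSupported {ι : Type*} (S : Set ι) : Submodule ℂ (ι → ℂ) where
  carrier := {c | ∀ i, i ∉ S → c i = 0}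
  add_mem' := by
    intro x y hx hy i hi
    simp only [Set.mem_setOf_eq] at hx hy
    simp [Pi.add_apply, hx i hi, hy i hi]
  zero_mem' := by intro i _; rfl
  smul_mem' := by
    intro r x hx i hi
    simp only [Set.mem_setOf_eq] at hx
    simp [Pi.smul_apply, hx i hi]

/-- The degree-γ part of the term of the Ishida complex ℧•_F(M) (base face `F`, monomial
module with degree set `E`) whose summands are indexed by the faces of absolute dimension
`j` (cohomological degree `j − d_F`): functions on the faces `G ⊇ F` with `d_G = j` and
`γ ∈ E − ℕG`. -/
def ishChain (a : Fin n → Lat d) (E : Set (Lat d)) (F : Set (Fin n)) (j : ℤ) (γ : Lat d) :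
    Submodule ℂ (FaceT a → ℂ) :=
  funSupported {G : FaceT a | F ⊆ G.1 ∧ (dimF a G.1 : ℤ) = j ∧ γ ∈ locE a E G.1}

/-- The differential of the Ishida complex (in each ℤ^d-degree): the component from a face
`G'` into a face `G''` covering it is `ε G' G''` times the natural localization map. -/
def ishDelta (a : Fin n → Lat d) (ε : Set (Fin n) → Set (Fin n) → ℂ) :
    (FaceT a → ℂ) →ₗ[ℂ] (FaceT a → ℂ) where
  toFun c := fun G'' => ∑ G' : FaceT a,
    if G'.1 ⊆ G''.1 ∧ dimF a G''.1 = dimF a G'.1 + 1 then ε G'.1 G''.1 * c G' else 0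
  map_add' x y := by
    funext G''
    simp only [Pi.add_apply, ← Finset.sum_add_distrib]
    refine Finset.sum_congr rfl fun G' _ => ?_
    by_cases h : G'.1 ⊆ G''.1 ∧ dimF a G''.1 = dimF a G'.1 + 1
    · simp [h, mul_add]
    · simp [h]
  map_smul' r x := by
    funext G''
    simp only [Pi.smul_apply, smul_eq_mul, RingHom.id_apply, Finset.mul_sum]
    refine Finset.sum_congr rfl fun G' _ => ?_
    by_cases h : G'.1 ⊆ G''.1 ∧ dimF a G''.1 = dimF a G'.1 + 1
    · simp only [h, and_self, if_true]; ring
    · simp [h]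

/-- Degree-γ cocycles of the Ishida complex at absolute dimension `j`. -/
def ishZ (a : Fin n → Lat d) (E : Set (Lat d)) (ε : Set (Fin n) → Set (Fin n) → ℂ)
    (F : Set (Fin n)) (j : ℤ) (γ : Lat d) : Submodule ℂ (FaceT a → ℂ) :=
  ishChain a E F j γ ⊓ LinearMap.ker (ishDelta a ε)

/-- Degree-γ coboundaries of the Ishida complex at absolute dimension `j`. -/
def ishB (a : Fin n → Lat d) (E : Set (Lat d)) (ε : Set (Fin n) → Set (Fin n) → ℂ)
    (F : Set (Fin n)) (j : ℤ) (γ : Lat d) : Submodule ℂ (FaceT a → ℂ) :=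
  Submodule.map (ishDelta a ε) (ishChain a E F (j - 1) γ)

/-- The degree-γ component of the cohomology of the Ishida complex ℧•_F(M) at absolute
dimension `j` (cohomological degree `j − d_F`). -/
abbrev ishH (a : Fin n → Lat d) (E : Set (Lat d)) (ε : Set (Fin n) → Set (Fin n) → ℂ)
    (F : Set (Fin n)) (j : ℤ) (γ : Lat d) :=
  ↥(ishZ a E ε F j γ) ⧸
    Submodule.comap (ishZ a E ε F j γ).subtype (ishB a E ε F j γ)

/-- Nonvanishing of the degree-γ component of the cohomology of the Ishida complex. -/
def ishHne (a : Fin n → Lat d) (E : Set (Lat d)) (ε : Set (Fin n) → Set (Fin n) → ℂ)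
    (F : Set (Fin n)) (j : ℤ) (γ : Lat d) : Prop :=
  ¬ (ishZ a E ε F j γ ≤ ishB a E ε F j γ)

/-- Degree-γ part of the term of ω•_{S_A} in cohomological degree `i`:
functions on the faces `G` with `d_{A/G} = i` and `γ ∈ ℕG − ℕA`. -/
def omChain (a : Fin n → Lat d) (i : ℤ) (γ : Lat d) : Submodule ℂ (FaceT a → ℂ) :=
  funSupported {G : FaceT a | (dimF a G.1 : ℤ) = (d : ℤ) - i ∧ γ ∈ NFmNA a G.1}

/-- Degree-γ part of the differential of ω•_{S_A}: the component from a face `G'` to a face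
`G''` covered by it is `ε G' G''` times the natural projection ℂ{ℕG'−ℕA} → ℂ{ℕG''−ℕA}. -/
def omDelta (a : Fin n → Lat d) (ε : Set (Fin n) → Set (Fin n) → ℂ) (γ : Lat d) :
    (FaceT a → ℂ) →ₗ[ℂ] (FaceT a → ℂ) where
  toFun c := fun G'' =>
    if γ ∈ NFmNA a G''.1 then
      ∑ G' : FaceT a,
        if G''.1 ⊆ G'.1 ∧ dimF a G'.1 = dimF a G''.1 + 1 then ε G'.1 G''.1 * c G' else 0
    else 0
  map_add' x y := by
    funext G''
    by_cases hγ : γ ∈ NFmNA a G''.1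
    · simp only [Pi.add_apply, hγ, if_true, ← Finset.sum_add_distrib]
      refine Finset.sum_congr rfl fun G' _ => ?_
      by_cases h : G''.1 ⊆ G'.1 ∧ dimF a G'.1 = dimF a G''.1 + 1
      · simp [h, mul_add]
      · simp [h]
    · simp [hγ]
  map_smul' r x := by
    funext G''
    by_cases hγ : γ ∈ NFmNA a G''.1
    · simp only [Pi.smul_apply, smul_eq_mul, RingHom.id_apply, hγ, if_true, Finset.mul_sum]
      refine Finset.sum_congr rfl fun G' _ => ?_
      by_cases h : G''.1 ⊆ G'.1 ∧ dimF a G'.1 = dimF a G''.1 + 1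
      · simp only [h, and_self, if_true]; ring
      · simp [h]
    · simp [hγ]

/-- Degree-γ cocycles of ω•_{S_A} in cohomological degree `i`. -/
def omZ (a : Fin n → Lat d) (ε : Set (Fin n) → Set (Fin n) → ℂ) (i : ℤ) (γ : Lat d) :
    Submodule ℂ (FaceT a → ℂ) :=
  omChain a i γ ⊓ LinearMap.ker (omDelta a ε γ)

/-- Degree-γ coboundaries of ω•_{S_A} in cohomological degree `i`. -/
def omB (a : Fin n → Lat d) (ε : Set (Fin n) → Set (Fin n) → ℂ) (i : ℤ) (γ : Lat d) :
    Submodule ℂ (FaceT a → ℂ) :=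
  Submodule.map (omDelta a ε γ) (omChain a (i - 1) γ)

/-- Nonvanishing of H^i(ω•_{S_A})_γ. -/
def omHne (a : Fin n → Lat d) (ε : Set (Fin n) → Set (Fin n) → ℂ) (i : ℤ) (γ : Lat d) : Prop :=
  ¬ (omZ a ε i γ ≤ omB a ε i γ)

/-- A ℤ^d-graded S_A-module, presented by its grading together with the (degree-shifting)
action of the monomials t^u, u ∈ ℕA. -/
structure GradedSAMod (a : Fin n → Lat d) (M : Type) [AddCommGroup M] [Module ℂ M] where
  decomp : Lat d → Submodule ℂ M
  internal : DirectSum.IsInternal decomp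
  act : (u : Lat d) → u ∈ NA a → (M →ₗ[ℂ] M)
  act_zero : ∀ h0 : (0 : Lat d) ∈ NA a, act 0 h0 = LinearMap.id
  act_add : ∀ (u : Lat d) (hu : u ∈ NA a) (v : Lat d) (hv : v ∈ NA a) (huv : u + v ∈ NA a),
    act (u + v) huv = (act u hu).comp (act v hv)
  act_grade : ∀ (u : Lat d) (hu : u ∈ NA a) (γ : Lat d), ∀ m ∈ decomp γ,
    act u hu m ∈ decomp (γ + u)

/-- Finite generation over S_A. -/
def GradedSAMod.FGmod {a : Fin n → Lat d} {M : Type} [AddCommGroup M] [Module ℂ M]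
    (g : GradedSAMod a M) : Prop :=
  ∃ S : Finset M, ∀ m : M,
    m ∈ Submodule.span ℂ {x | ∃ u, ∃ hu : u ∈ NA a, ∃ s ∈ S, x = g.act u hu s}

/-- Degrees of nonzero homogeneous elements of `M` that survive in the localization
`M[∂^{−H}]` (i.e. are killed by no power of t^{σ_H}). -/
def GradedSAMod.survTdeg {a : Fin n → Lat d} {M : Type} [AddCommGroup M] [Module ℂ M]
    (g : GradedSAMod a M) (H : Set (Fin n)) : Set (Lat d) :=
  {γ | ∃ m ∈ g.decomp γ, m ≠ 0 ∧ ∀ (k : ℕ) (hk : k • sigmaF a H ∈ NA a), g.act _ hk m ≠ 0}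

/-- The quasidegree set of the localization `M[∂^{−H}]` of a finitely generated graded
module `M`: the union over `k` of the Zariski closures of the true degree sets of the
finitely generated graded submodules t^{−kσ_H}·M of the localization. -/
def GradedSAMod.qdegLoc {a : Fin n → Lat d} {M : Type} [AddCommGroup M] [Module ℂ M]
    (g : GradedSAMod a M) (H : Set (Fin n)) : Set (CS d) :=
  ⋃ k : ℕ, zClosure (toC '' {γ : Lat d | γ + k • sigmaF a H ∈ g.survTdeg H})

/-- A ℂ-submodule is graded: it is spanned by its homogeneous elements. -/
def IsGradedSubC {d : ℕ} {M : Type} [AddCommGroup M] [Module ℂ M]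
    (decomp : Lat d → Submodule ℂ M) (N : Submodule ℂ M) : Prop :=
  N = Submodule.span ℂ ((N : Set M) ∩ ⋃ γ : Lat d, (decomp γ : Set M))

/-- A ℂ-submodule is an S_A-submodule: stable under the monomial action. -/
def IsStableSub {a : Fin n → Lat d} {M : Type} [AddCommGroup M] [Module ℂ M]
    (g : GradedSAMod a M) (N : Submodule ℂ M) : Prop :=
  ∀ (u : Lat d) (hu : u ∈ NA a), ∀ m ∈ N, g.act u hu m ∈ N

/-- The semigroup ring S_A = ℂ[ℕA] as a subalgebra of ℂ[ℤ^d]. -/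
def SAlg (a : Fin n → Lat d) : Subalgebra ℂ (Laur d) :=
  Algebra.adjoin ℂ {x | ∃ α ∈ NA a, x = mono α}

/-- The monomial t^u, u ∈ ℕA, as an element of S_A. -/
def smono (a : Fin n → Lat d) (u : Lat d) (hu : u ∈ NA a) : ↥(SAlg a) :=
  ⟨mono u, Algebra.subset_adjoin ⟨u, hu, rfl⟩⟩

/-- The underlying ℂ-vector space of the monomial module ℂ{E}: finitely supported
functions on `E`. -/
abbrev wMod (d : ℕ) (E : Set (Lat d)) := ↥(Finsupp.supported ℂ ℂ E)

/-- The action of the monomial t^w on ℂ{E}: shift the degree by `w`, truncate back to `E`. -/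
def wAct {d : ℕ} (E : Set (Lat d)) (w : Lat d) : wMod d E →ₗ[ℂ] wMod d E :=
  (Finsupp.restrictDom ℂ ℂ E).comp
    ((Finsupp.lmapDomain ℂ ℂ (fun γ => γ + w)).comp (Finsupp.supported ℂ ℂ E).subtype)

/-- The elements annihilated by some power of the ideal generated by the t^{a_i}, i ∉ F. -/
def torsionAt (a : Fin n → Lat d) (F : Set (Fin n)) {ML : Type} [AddCommGroup ML]
    [Module ℂ ML] (TL : (u : Lat d) → u ∈ NA a → (ML →ₗ[ℂ] ML)) : Set ML :=
  {y | ∃ k : ℕ, ∀ f : Fin k → Fin n, (∀ j, f j ∉ F) →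
    ∀ h : (∑ j, a (f j)) ∈ NA a, TL (∑ j, a (f j)) h y = 0}

/-- The toric ideal I_A ⊆ R_A = ℂ[∂_1,…,∂_n]. -/
def toricIdeal (a : Fin n → Lat d) : Ideal (MvPolynomial (Fin n) ℂ) :=
  RingHom.ker (MvPolynomial.aeval (fun i => mono (a i)) : MvPolynomial (Fin n) ℂ →ₐ[ℂ] Laur d)

/-- The ideal I_F^A = I_A + ⟨∂_i : a_i ∉ F⟩ of R_A. -/
def IFA (a : Fin n → Lat d) (F : Set (Fin n)) : Ideal (MvPolynomial (Fin n) ℂ) :=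
  toricIdeal a ⊔ Ideal.span {p | ∃ i, i ∉ F ∧ p = MvPolynomial.X i}

/-- An R_A-submodule is graded: it is spanned by its homogeneous elements. -/
def IsGradedSubR {d n : ℕ} {M : Type} [AddCommGroup M] [Module ℂ M]
    [Module (MvPolynomial (Fin n) ℂ) M]
    (decomp : Lat d → Submodule ℂ M) (N : Submodule (MvPolynomial (Fin n) ℂ) M) : Prop :=
  N = Submodule.span (MvPolynomial (Fin n) ℂ) ((N : Set M) ∩ ⋃ γ : Lat d, (decomp γ : Set M))

/-- `h` is the primitive integral support function of the facet `G`. -/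
def IsPISF (a : Fin n → Lat d) (G : Set (Fin n)) (h : Lat d →ₗ[ℤ] ℤ) : Prop :=
  (∃ x, h x = 1) ∧ (∀ i, 0 ≤ h (a i)) ∧ (∀ i, h (a i) = 0 ↔ i ∈ G)

/-- The ℂ-linear extension of an integral linear form to ℂ^d. -/
def hC {d : ℕ} (h : Lat d →ₗ[ℤ] ℤ) (β : CS d) : ℂ :=
  ∑ j : Fin d, β j * ((h (Pi.single j 1) : ℤ) : ℂ)

/-!
Test `α + k σ_F` for large `k`. If it is not in `ℝ≥0 A`, Farkas' lemma gives a linear form that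
is nonnegative on the columns and negative on it; rotating the form about its zero set until that
zero set spans a hyperplane makes it a facet form, and since the columns on that hyperplane span a
sublattice of rank `d - 1`, the form is a positive real multiple of the primitive support function
`h_G` of a facet `G`. Now `h_G (α + k σ_F) < 0` is impossible: if `F ⊆ G` it equals `h_G α ≥ 0`,
and otherwise `h_G σ_F ≥ 1`, while `h_G` is unique for each of the finitely many facets, so `k` can
be fixed in advance with `h_G α + k ≥ 0` for all of them. Normality then puts `α + k σ_F` in `ℕA`,
and `k σ_F ∈ ℕF`.
-/

section ConeSeparation

variable {𝕜 : Type*} [Field 𝕜] [LinearOrder 𝕜] [IsStrictOrderedRing 𝕜]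

theorem exists_add_mul_nonneg_eq_zero {ι : Type*} [Fintype ι] (p q : ι → 𝕜)
    (hp : ∀ i, 0 ≤ p i) (hq : ∃ i, q i < 0) :
    ∃ t, (∀ i, 0 ≤ p i + t * q i) ∧ ∃ j, q j < 0 ∧ p j + t * q j = 0 := by
  obtain ⟨j, hjT, hjmin⟩ := (Finset.univ.filter fun i => q i < 0).exists_min_image
    (fun i => p i / -q i) (by simpa [Finset.filter_nonempty_iff] using hq)
  have hqj : q j < 0 := (Finset.mem_filter.1 hjT).2
  refine ⟨p j / -q j, fun i => ?_, j, hqj, ?_⟩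
  · rcases lt_or_ge (q i) 0 with hqi | hqi
    · have := (le_div_iff₀ (neg_pos.2 hqi)).1
        (hjmin i (Finset.mem_filter.2 ⟨Finset.mem_univ i, hqi⟩))
      linarith [mul_neg (p j / -q j) (q i)]
    · exact add_nonneg (hp i) (mul_nonneg (div_nonneg (hp j) (neg_nonneg.2 hqj.le)) hqi)
  · rw [div_neg, neg_mul, div_mul_cancel₀ _ hqj.ne, add_neg_cancel]

variable {V : Type*} [AddCommGroup V] [Module 𝕜 V]

theorem exists_dual_nonneg_of_not_exists_nonneg_sum {m : ℕ} (v : Fin m → V) {x : V}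
    (hx : ¬ ∃ c : Fin m → 𝕜, (∀ i, 0 ≤ c i) ∧ ∑ i, c i • v i = x) :
    ∃ φ : Module.Dual 𝕜 V, (∀ i, 0 ≤ φ (v i)) ∧ φ x < 0 := by
  induction m generalizing x with
  | zero =>
    have hx0 : x ≠ 0 := fun h => hx ⟨0, fun i => i.elim0, by simp [h]⟩
    obtain ⟨φ, hφ⟩ : ∃ φ : Module.Dual 𝕜 V, φ x ≠ 0 := by
      by_contra! h
      exact hx0 ((Module.forall_dual_apply_eq_zero_iff 𝕜 x).1 h)
    rcases hφ.lt_or_gt with h | h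
    · exact ⟨φ, fun i => i.elim0, h⟩
    · exact ⟨-φ, fun i => i.elim0, by simpa using h⟩
  | succ m ih =>
    set s := v (Fin.last m)
    have extend : ∀ (c : Fin m → 𝕜) (t : 𝕜), (∀ i, 0 ≤ c i) → 0 ≤ t →
        ∑ i, c i • v i.castSucc + t • s ≠ x := fun c t hc ht hsum =>
      hx ⟨Fin.snoc c t, Fin.forall_fin_succ'.2 ⟨by simpa using hc, by simpa using ht⟩,
        by simpa [Fin.sum_univ_castSucc] using hsum⟩
    obtain ⟨φ, hφv, hφx⟩ := ih (fun i => v i.castSucc) (x := x) fun ⟨c, hc, hsum⟩ =>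
      extend c 0 hc le_rfl (by simpa using hsum)
    by_cases hφs : 0 ≤ φ s
    · exact ⟨φ, Fin.forall_fin_succ'.2 ⟨hφv, hφs⟩, hφx⟩
    rw [not_le] at hφs
    -- project along `s` onto `ker φ`; a separating form there, pulled back, vanishes on `s`
    set π : V →ₗ[𝕜] V := LinearMap.id - (φ s)⁻¹ • φ.smulRight s
    have hπ : ∀ y, π y = y - (φ y / φ s) • s := fun y => by
      simp [π, div_eq_inv_mul, mul_smul]
    have hπs : π s = 0 := by simp [hπ, hφs.ne]
    obtain ⟨ψ, hψv, hψx⟩ := ih (fun i => π (v i.castSucc)) (x := π x) fun ⟨c, hc, hsum⟩ => by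
      set y := x - ∑ i, c i • v i.castSucc
      have hy : y = (φ y / φ s) • s := by
        rw [← sub_eq_zero, ← hπ]
        simp [y, ← hsum, map_sum]
      have hφy : φ y < 0 := by
        simp only [y, map_sub, map_sum, map_smul, smul_eq_mul]
        linarith [Finset.sum_nonneg fun i (_ : i ∈ Finset.univ) => mul_nonneg (hc i) (hφv i)]
      refine extend c _ hc (div_nonneg_of_nonpos hφy.le hφs.le) ?_
      rw [← hy]; simp [y]
    exact ⟨ψ ∘ₗ π, Fin.forall_fin_succ'.2 ⟨hψv, (congrArg ψ hπs).trans (map_zero ψ) |>.ge⟩, hψx⟩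

end ConeSeparation

section ZeroSpan

variable {R V ι : Type*} [CommRing R] [AddCommGroup V] [Module R V]

def zeroSpan (v : ι → V) (φ : Module.Dual R V) : Submodule R V :=
  Submodule.span R (v '' {i | φ (v i) = 0})

theorem zeroSpan_le_ker (v : ι → V) (φ : Module.Dual R V) : zeroSpan v φ ≤ LinearMap.ker φ :=
  Submodule.span_le.2 <| by rintro _ ⟨i, hi, rfl⟩; exact hi

end ZeroSpan

section FacetForm

variable {𝕜 V ι : Type*} [Field 𝕜] [LinearOrder 𝕜] [IsStrictOrderedRing 𝕜]
  [AddCommGroup V] [Module 𝕜 V] [FiniteDimensional 𝕜 V] [Fintype ι] {v : ι → V}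

theorem exists_dual_zeroSpan_lt (hv : Submodule.span 𝕜 (Set.range v) = ⊤)
    {φ : Module.Dual 𝕜 V} {x : V} (hφv : ∀ i, 0 ≤ φ (v i)) (hφx : φ x < 0)
    (hφ : Module.finrank 𝕜 (zeroSpan v φ) + 1 < Module.finrank 𝕜 V) :
    ∃ ψ : Module.Dual 𝕜 V, (∀ i, 0 ≤ ψ (v i)) ∧ ψ x < 0 ∧ zeroSpan v φ < zeroSpan v ψ := by
  -- rotate `φ` about `zeroSpan v φ ⊔ 𝕜 x` until it vanishes on one more generator
  set W := zeroSpan v φ ⊔ Submodule.span 𝕜 {x}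
  have hW : W ≠ ⊤ := fun h => by
    have := Submodule.finrank_add_le_finrank_add_finrank (zeroSpan v φ) (Submodule.span 𝕜 {x})
    rw [show zeroSpan v φ ⊔ Submodule.span 𝕜 {x} = ⊤ from h, finrank_top] at this
    have : Module.finrank 𝕜 (Submodule.span 𝕜 {x}) ≤ 1 := by
      simpa using finrank_span_le_card (R := 𝕜) ({x} : Set V)
    omega
  obtain ⟨i, hi⟩ : ∃ i, v i ∉ W := by
    by_contra! h
    exact hW (eq_top_iff.2 (hv ▸ Submodule.span_le.2 (Set.range_subset_iff.2 h)))
  obtain ⟨g, hgi, hgW⟩ := W.exists_dual_map_eq_bot_of_notMem hi inferInstance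
  rw [← LinearMap.le_ker_iff_map] at hgW
  obtain ⟨g, hgZ, hgx, hneg⟩ : ∃ g : Module.Dual 𝕜 V, zeroSpan v φ ≤ LinearMap.ker g ∧
      g x = 0 ∧ ∃ i, g (v i) < 0 := by
    have hZ := le_sup_left.trans hgW
    have hx : g x = 0 :=
      hgW (le_sup_right (a := zeroSpan v φ) (Submodule.mem_span_singleton_self x))
    rcases hgi.lt_or_gt with h | h
    · exact ⟨g, hZ, hx, i, h⟩
    · exact ⟨-g, fun w hw => by simpa using hZ hw, by simp [hx], i, by simpa using h⟩
  obtain ⟨t, ht, j, hj, htj⟩ := exists_add_mul_nonneg_eq_zero _ _ hφv hneg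
  refine ⟨φ + t • g, ht, by simpa [hgx] using hφx,
    SetLike.lt_iff_le_and_exists.2 ⟨?_, v j, ?_, ?_⟩⟩
  · refine Submodule.span_mono (Set.image_mono fun i (hi : φ (v i) = 0) => ?_)
    have : g (v i) = 0 := hgZ (Submodule.subset_span ⟨i, hi, rfl⟩)
    simp [hi, this]
  · exact Submodule.subset_span ⟨j, htj, rfl⟩
  · exact fun h => hj.ne (hgZ h)

theorem exists_dual_finrank_zeroSpan_add_one (hv : Submodule.span 𝕜 (Set.range v) = ⊤)
    {φ : Module.Dual 𝕜 V} {x : V} (hφv : ∀ i, 0 ≤ φ (v i)) (hφx : φ x < 0) :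
    ∃ ψ : Module.Dual 𝕜 V, (∀ i, 0 ≤ ψ (v i)) ∧ ψ x < 0 ∧
      Module.finrank 𝕜 (zeroSpan v ψ) + 1 = Module.finrank 𝕜 V := by
  induction hk : Module.finrank 𝕜 V - Module.finrank 𝕜 (zeroSpan v φ)
    using Nat.strong_induction_on generalizing φ with
  | _ k ih =>
  have hlt : Module.finrank 𝕜 (zeroSpan v φ) < Module.finrank 𝕜 V :=
    Submodule.finrank_lt <| ((zeroSpan_le_ker v φ).trans_lt <| lt_top_iff_ne_top.2 fun h =>
      hφx.ne (LinearMap.ker_eq_top.1 h ▸ rfl)).ne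
  by_cases h : Module.finrank 𝕜 (zeroSpan v φ) + 1 < Module.finrank 𝕜 V
  · obtain ⟨ψ, hψv, hψx, hφψ⟩ := exists_dual_zeroSpan_lt hv hφv hφx h
    have := Submodule.finrank_lt_finrank_of_lt hφψ
    exact ih _ (by omega) hψv hψx rfl
  · exact ⟨φ, hφv, hφx, by omega⟩

end FacetForm

theorem finrank_range_add_finrank_ker_of_isDomain {R M N : Type*} [CommRing R] [IsDomain R]
    [AddCommGroup M] [Module R M] [Module.Finite R M] [AddCommGroup N] [Module R N]
    (f : M →ₗ[R] N) :
    Module.finrank R (LinearMap.range f) + Module.finrank R (LinearMap.ker f) =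
      Module.finrank R M := by
  rw [← f.quotKerEquivRange.finrank_eq, Submodule.finrank_quotient_add_finrank]

theorem exists_int_form_of_finrank_range_eq_one {M : Type*} [AddCommGroup M] [Module.Finite ℤ M]
    (ψ : M →ₗ[ℤ] ℝ) (hψ : Module.finrank ℤ (LinearMap.range ψ) = 1) :
    ∃ (h : M →ₗ[ℤ] ℤ) (g : ℝ), 0 < g ∧ (∃ y, h y = 1) ∧ ∀ y, ψ y = h y * g := by
  let b := Module.finBasisOfFinrankEq ℤ (LinearMap.range ψ) hψ
  have hb : ∀ w : LinearMap.range ψ, (w : ℝ) = b.coord 0 w * (b 0 : ℝ) := fun w => by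
    conv_lhs => rw [← b.sum_repr w]
    simp
  have hg : (b 0 : ℝ) ≠ 0 := by simpa using b.ne_zero 0
  obtain ⟨y₀, hy₀⟩ := ψ.surjective_rangeRestrict (b 0)
  let h₀ := b.coord 0 ∘ₗ ψ.rangeRestrict
  have hh₀ : h₀ y₀ = 1 := by simp [h₀, hy₀]
  rcases hg.lt_or_gt with hneg | hpos
  · exact ⟨-h₀, -(b 0 : ℝ), neg_pos.2 hneg, ⟨-y₀, by simp [hh₀]⟩, fun y => by
      simpa [h₀] using hb (ψ.rangeRestrict y)⟩
  · exact ⟨h₀, b 0, hpos, ⟨y₀, hh₀⟩, fun y => hb (ψ.rangeRestrict y)⟩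

section IntForms

variable {M : Type*} [AddCommGroup M] [Module.Finite ℤ M] {h₁ h₂ : M →ₗ[ℤ] ℤ}
  {P : Submodule ℤ M}

theorem exists_eq_mul_of_le_ker (hP : Module.finrank ℤ M ≤ Module.finrank ℤ P + 1)
    (hP₁ : P ≤ LinearMap.ker h₁) (hP₂ : P ≤ LinearMap.ker h₂) {x : M} (hx : h₁ x = 1) :
    ∀ z, h₂ z = h₂ x * h₁ z := by
  set f := h₁.prod h₂
  have hrange : Module.finrank ℤ (LinearMap.range f) ≤ 1 := by
    have := finrank_range_add_finrank_ker_of_isDomain f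
    have := Submodule.finrank_mono (show P ≤ LinearMap.ker f by
      rw [LinearMap.ker_prod]; exact le_inf hP₁ hP₂)
    omega
  intro z
  by_contra hz
  -- otherwise `f x = (1, h₂ x)` and `f z` would be independent in the range of `f`
  have hind : LinearIndependent ℤ ![f x, f z] := by
    refine LinearIndependent.pair_iff.2 fun s t hst => ?_
    have h1 : s + t * h₁ z = 0 := by simpa [f, hx] using congrArg Prod.fst hst
    have h2 : s * h₂ x + t * h₂ z = 0 := by simpa [f] using congrArg Prod.snd hst
    have ht : t * (h₂ z - h₂ x * h₁ z) = 0 := by linear_combination h2 - h₂ x * h1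
    have ht : t = 0 := (mul_eq_zero.1 ht).resolve_right (sub_ne_zero.2 hz)
    exact ⟨by simpa [ht] using h1, ht⟩
  have h2 : Module.finrank ℤ (Submodule.span ℤ (Set.range ![f x, f z])) = 2 := by
    simpa using finrank_span_eq_card hind
  have := Submodule.finrank_mono (Submodule.span_le.2 (Set.range_subset_iff.2 fun i =>
    show ![f x, f z] i ∈ LinearMap.range f by fin_cases i <;> simp))
  omega

theorem eq_of_le_ker (hP : Module.finrank ℤ M ≤ Module.finrank ℤ P + 1)
    (hP₁ : P ≤ LinearMap.ker h₁) (hP₂ : P ≤ LinearMap.ker h₂) (hs₁ : ∃ x, h₁ x = 1)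
    (hs₂ : ∃ x, h₂ x = 1) {y : M} (hy₁ : 0 < h₁ y) (hy₂ : 0 < h₂ y) : h₁ = h₂ := by
  obtain ⟨x₁, hx₁⟩ := hs₁
  obtain ⟨x₂, hx₂⟩ := hs₂
  have hmul := exists_eq_mul_of_le_ker hP hP₁ hP₂ hx₁
  have hc : h₂ x₁ = 1 := by
    refine Int.eq_one_of_dvd_one ?_ ⟨h₁ x₂, by rw [← hmul, hx₂]⟩
    exact (pos_of_mul_pos_left (hmul y ▸ hy₂) hy₁.le).le
  ext z
  simp [hmul z, hc]

end IntForms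

section Lattice

variable {d n : ℕ}

def toRL (d : ℕ) : Lat d →ₗ[ℤ] (Fin d → ℝ) := (Int.castAddHom ℝ).toIntLinearMap.compLeft (Fin d)

theorem toR_mem_span_of_mem_span_int {S : Set (Lat d)} {y : Lat d}
    (hy : y ∈ Submodule.span ℤ S) :
    toR y ∈ Submodule.span ℝ (toR '' S) := by
  have := Submodule.mem_map_of_mem (f := toRL d) hy
  rw [Submodule.map_span] at this
  exact Submodule.span_le_restrictScalars ℤ ℝ _ this

theorem finrank_span_toR_le (S : Set (Lat d)) :
    Module.finrank ℝ (Submodule.span ℝ (toR '' S)) ≤ Module.finrank ℤ (Submodule.span ℤ S) := by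
  set T := Submodule.span ℤ S
  let b := Module.Free.chooseBasis ℤ T
  have hT : Submodule.span ℤ (Set.range fun i => (b i : Lat d)) = T := by
    rw [Set.range_comp' Subtype.val, ← Submodule.coe_subtype, ← Submodule.map_span, b.span_eq,
      Submodule.map_subtype_top]
  have hST : toR '' S ⊆ Submodule.span ℝ (Set.range fun i => toR (b i : Lat d)) := by
    rintro _ ⟨s, hs, rfl⟩
    rw [Set.range_comp' toR]
    exact toR_mem_span_of_mem_span_int (hT.symm ▸ Submodule.subset_span hs : s ∈ _)
  calc Module.finrank ℝ (Submodule.span ℝ (toR '' S))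
      ≤ Module.finrank ℝ (Submodule.span ℝ (Set.range fun i => toR (b i : Lat d))) :=
        Submodule.finrank_mono (Submodule.span_le.2 hST)
    _ ≤ Fintype.card (Module.Free.ChooseBasisIndex ℤ T) := finrank_range_le_card _
    _ = Module.finrank ℤ T := (Module.finrank_eq_card_chooseBasisIndex ℤ T).symm

theorem span_toR_eq_top {a : Fin n → Lat d} (hZA : SpansZ a) :
    Submodule.span ℝ (Set.range fun i => toR (a i)) = ⊤ := by
  have hZ : Submodule.span ℤ (Set.range a) = ⊤ := by
    rw [← Submodule.toAddSubgroup_inj, Submodule.span_int_eq_addSubgroupClosure, hZA]; rfl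
  rw [eq_top_iff, ← (Pi.basisFun ℝ (Fin d)).span_eq, Submodule.span_le]
  rintro _ ⟨j, rfl⟩
  have := toR_mem_span_of_mem_span_int (hZ ▸ Submodule.mem_top (x := (Pi.single j 1 : Lat d)))
  rw [← Set.range_comp] at this
  have hj : Pi.basisFun ℝ (Fin d) j = toR (Pi.single j 1) := by
    ext k; simp [toR, Pi.single_apply]
  rwa [SetLike.mem_coe, hj]

end Lattice

section Columns

variable {d n : ℕ} {a : Fin n → Lat d}

theorem apply_nonneg_of_mem_cone {φ : Module.Dual ℝ (Fin d → ℝ)} (hφ : ∀ i, 0 ≤ φ (toR (a i)))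
    {F : Set (Fin n)} {x : Fin d → ℝ} (hx : x ∈ cone a F) : 0 ≤ φ x := by
  obtain ⟨c, hc, -, rfl⟩ := hx
  simpa using Finset.sum_nonneg fun i (_ : i ∈ Finset.univ) => mul_nonneg (hc i) (hφ i)

theorem mem_cone_setOf_apply_eq_zero_iff {φ : Module.Dual ℝ (Fin d → ℝ)}
    (hφ : ∀ i, 0 ≤ φ (toR (a i))) {x : Fin d → ℝ} :
    x ∈ cone a {i | φ (toR (a i)) = 0} ↔ x ∈ cone a Set.univ ∧ φ x = 0 := by
  constructor
  · rintro ⟨c, hc, hcG, rfl⟩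
    refine ⟨⟨c, hc, fun i hi => absurd trivial hi, rfl⟩, ?_⟩
    simp only [map_sum, map_smul, smul_eq_mul]
    exact Finset.sum_eq_zero fun i _ => by_cases (fun h : φ (toR (a i)) = 0 => by simp [h])
      fun h => by simp [hcG i h]
  · rintro ⟨⟨c, hc, -, rfl⟩, hx⟩
    refine ⟨c, hc, fun i hi => ?_, rfl⟩
    simp only [map_sum, map_smul, smul_eq_mul] at hx
    have := (Finset.sum_eq_zero_iff_of_nonneg fun i _ => mul_nonneg (hc i) (hφ i)).1 hx i
      (Finset.mem_univ i)
    exact (mul_eq_zero.1 this).resolve_right hi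

theorem isFace_setOf_apply_eq_zero {φ : Module.Dual ℝ (Fin d → ℝ)}
    (hφ : ∀ i, 0 ≤ φ (toR (a i))) : IsFace a {i | φ (toR (a i)) = 0} := by
  refine ⟨fun x y hx hy hxy => ?_, fun i hi => ((mem_cone_setOf_apply_eq_zero_iff hφ).1 hi).2⟩
  have hx₀ := apply_nonneg_of_mem_cone hφ hx
  have hy₀ := apply_nonneg_of_mem_cone hφ hy
  have hxy₀ := ((mem_cone_setOf_apply_eq_zero_iff hφ).1 hxy).2
  rw [map_add] at hxy₀
  exact ⟨(mem_cone_setOf_apply_eq_zero_iff hφ).2 ⟨hx, by linarith⟩,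
    (mem_cone_setOf_apply_eq_zero_iff hφ).2 ⟨hy, by linarith⟩⟩

theorem exists_isPISF_apply_neg_of_notMem_cone (hZA : SpansZ a) {y : Lat d}
    (hy : toR y ∉ cone a Set.univ) :
    ∃ G h, IsFace a G ∧ dimF a G = d - 1 ∧ IsPISF a G h ∧ h y < 0 := by
  obtain ⟨φ₀, hφ₀, hφ₀y⟩ := exists_dual_nonneg_of_not_exists_nonneg_sum
    (fun i => toR (a i)) (x := toR y) fun ⟨c, hc, hsum⟩ => hy ⟨c, hc, by simp, hsum.symm⟩
  obtain ⟨φ, hφ, hφy, hrank⟩ :=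
    exists_dual_finrank_zeroSpan_add_one (span_toR_eq_top hZA) hφ₀ hφ₀y
  rw [Module.finrank_fin_fun, zeroSpan, ← Set.image_image toR a] at hrank
  set G := {i | φ (toR (a i)) = 0}
  let ψ := φ.restrictScalars ℤ ∘ₗ toRL d
  have hP : Submodule.span ℤ (a '' G) ≤ LinearMap.ker ψ :=
    Submodule.span_le.2 <| by rintro _ ⟨i, hi, rfl⟩; exact hi
  -- `ker ψ` contains a sublattice of rank `d - 1`, so the subgroup `range ψ` of `ℝ` is cyclic
  have hPrank := finrank_span_toR_le (a '' G)
  have hψ : 0 < Module.finrank ℤ (LinearMap.range ψ) :=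
    Module.finrank_pos_iff.2 ⟨⟨ψ y, y, rfl⟩, 0, fun h => hφy.ne (congrArg Subtype.val h)⟩
  have hker := Submodule.finrank_mono hP
  have hnull := finrank_range_add_finrank_ker_of_isDomain ψ
  rw [Module.finrank_fin_fun] at hnull
  obtain ⟨h, g, hg, hsurj, hψh⟩ := exists_int_form_of_finrank_range_eq_one ψ (by omega)
  have key : ∀ z, φ (toR z) = h z * g := hψh
  refine ⟨G, h, isFace_setOf_apply_eq_zero hφ, by rw [dimF]; omega,
    ⟨hsurj, fun i => ?_, fun i => ?_⟩, ?_⟩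
  · have := key (a i) ▸ hφ i
    exact_mod_cast nonneg_of_mul_nonneg_left this hg
  · simp [G, key, hg.ne']
  · have := key y ▸ hφy
    exact_mod_cast neg_of_mul_neg_left this hg.le

end Columns

section SupportForms

variable {d n : ℕ} {a : Fin n → Lat d} {h : Lat d →ₗ[ℤ] ℤ}

theorem apply_nonneg_of_mem_NA (hpos : ∀ i, 0 ≤ h (a i)) {u : Lat d} (hu : u ∈ NA a) :
    0 ≤ h u := by
  induction hu using AddSubmonoid.closure_induction with
  | mem _ hz => obtain ⟨i, rfl⟩ := hz; exact hpos i
  | zero => simp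
  | add _ _ _ _ hz hw => rw [map_add]; exact add_nonneg hz hw

theorem apply_eq_zero_of_mem_NFace {F : Set (Fin n)} (hF : ∀ i ∈ F, h (a i) = 0) {u : Lat d}
    (hu : u ∈ NFace a F) : h u = 0 := by
  induction hu using AddSubmonoid.closure_induction with
  | mem _ hz => obtain ⟨i, hi, rfl⟩ := hz; exact hF i hi
  | zero => simp
  | add _ _ _ _ hz hw => rw [map_add, hz, hw, add_zero]

theorem sigmaF_mem_NFace (a : Fin n → Lat d) (F : Set (Fin n)) : sigmaF a F ∈ NFace a F :=
  AddSubmonoid.sum_mem _ fun i _ => by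
    split_ifs with hi
    · exact AddSubmonoid.subset_closure ⟨i, hi, rfl⟩
    · exact zero_mem _

theorem one_le_apply_sigmaF (hpos : ∀ i, 0 ≤ h (a i)) {F : Set (Fin n)} {i : Fin n} (hi : i ∈ F)
    (hhi : h (a i) ≠ 0) : 1 ≤ h (sigmaF a F) := by
  rw [sigmaF, map_sum]
  calc 1 ≤ h (if i ∈ F then a i else 0) := by rw [if_pos hi]; exact (hpos i).lt_of_ne' hhi
    _ ≤ _ := Finset.single_le_sum (f := fun j => h (if j ∈ F then a j else 0))
        (fun j _ => by split_ifs <;> simp [hpos]) (Finset.mem_univ i)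

theorem eq_zero_of_apply_columns_eq_zero (hZA : SpansZ a) (h0 : ∀ i, h (a i) = 0) : h = 0 := by
  have : AddSubgroup.closure (Set.range a) ≤ (LinearMap.ker h).toAddSubgroup :=
    (AddSubgroup.closure_le _).2 (Set.range_subset_iff.2 h0)
  rw [hZA] at this
  exact LinearMap.ext fun y => this (AddSubgroup.mem_top y)

theorem IsPISF.unique (hZA : SpansZ a) {G : Set (Fin n)} (hG : dimF a G = d - 1)
    {h₁ h₂ : Lat d →ₗ[ℤ] ℤ} (hh₁ : IsPISF a G h₁) (hh₂ : IsPISF a G h₂) : h₁ = h₂ := by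
  obtain ⟨j, hj⟩ : ∃ j, j ∉ G := by
    by_contra! hG
    obtain ⟨x, hx⟩ := hh₁.1
    simp [eq_zero_of_apply_columns_eq_zero hZA fun i => (hh₁.2.2 i).2 (hG i)] at hx
  have hP : ∀ {h}, IsPISF a G h → Submodule.span ℤ (a '' G) ≤ LinearMap.ker h :=
    fun hh => Submodule.span_le.2 <| by rintro _ ⟨i, hi, rfl⟩; exact (hh.2.2 i).2 hi
  refine eq_of_le_ker (P := Submodule.span ℤ (a '' G)) ?_ (hP hh₁) (hP hh₂) hh₁.1 hh₂.1
    ((hh₁.2.1 j).lt_of_ne' fun h => hj ((hh₁.2.2 j).1 h))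
    ((hh₂.2.1 j).lt_of_ne' fun h => hj ((hh₂.2.2 j).1 h))
  rw [Module.finrank_fin_fun, ← dimF, hG]
  omega

theorem finite_setOf_isPISF (hZA : SpansZ a) :
    {h : Lat d →ₗ[ℤ] ℤ | ∃ G, dimF a G = d - 1 ∧ IsPISF a G h}.Finite := by
  refine Set.Finite.of_finite_image (f := fun h => {i | h (a i) = 0}) (Set.toFinite _) ?_
  rintro h₁ ⟨G₁, hG₁, hh₁⟩ h₂ ⟨G₂, -, hh₂⟩ heq
  have hG : ∀ {G h}, IsPISF a G h → {i | h (a i) = 0} = G := fun hh => Set.ext hh.2.2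
  have : G₁ = G₂ := (hG hh₁).symm.trans (heq.trans (hG hh₂))
  exact IsPISF.unique hZA hG₁ hh₁ (this ▸ hh₂)

end SupportForms

theorem NAmNF_support_function_description_general
    {d n : ℕ} (a : Fin n → Lat d)
    (hZA : SpansZ a) (hNorm : Normal a)
    (F : Set (Fin n)) :
    ∀ α : Lat d, α ∈ NAmNF a F ↔
      ∀ G : Set (Fin n), IsFace a G → F ⊆ G → dimF a G = d - 1 →
        ∀ h : Lat d →ₗ[ℤ] ℤ, IsPISF a G h → 0 ≤ h α := by
  intro α
  constructor
  · rintro ⟨u, hu, v, hv, rfl⟩ G - hFG - h hh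
    rw [map_sub, apply_eq_zero_of_mem_NFace (fun i hi => (hh.2.2 i).2 (hFG hi)) hv, sub_zero]
    exact apply_nonneg_of_mem_NA hh.2.1 hu
  · intro hα
    obtain ⟨m, hm⟩ := ((finite_setOf_isPISF hZA).image fun h => h α).bddBelow
    set k := (-m).toNat
    refine ⟨α + k • sigmaF a F, (hNorm _).2 ?_, k • sigmaF a F,
      nsmul_mem (sigmaF_mem_NFace a F) k, by simp⟩
    by_contra hy
    obtain ⟨G, h, hG, hdim, hh, hneg⟩ := exists_isPISF_apply_neg_of_notMem_cone hZA hy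
    rw [map_add, map_nsmul, nsmul_eq_mul] at hneg
    by_cases hFG : F ⊆ G
    · have hσ := apply_eq_zero_of_mem_NFace (fun i hi => (hh.2.2 i).2 (hFG hi))
        (sigmaF_mem_NFace a F)
      rw [hσ, mul_zero, add_zero] at hneg
      exact hneg.not_ge (hα G hG hFG hdim h hh)
    · obtain ⟨i, hiF, hiG⟩ := Set.not_subset.1 hFG
      have hσ := one_le_apply_sigmaF hh.2.1 hiF fun h0 => hiG ((hh.2.2 i).1 h0)
      have hmα : m ≤ h α := hm ⟨h, ⟨G, hdim, hh⟩, rfl⟩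
      have hk : -m ≤ k := Int.self_le_toNat _
      nlinarith

/-- Assume ℕA is normal.  Then for every face `F ⪯ A`:
ℕA − ℕF = {α ∈ ℤ^d : h_G(α) ≥ 0 for every facet G of A with G ⪰ F}, where `h_G` is the
primitive integral support function of the facet `G`. -/
theorem NAmNF_support_function_description
    {d n : ℕ} (hd : 0 < d) (hn : 0 < n) (a : Fin n → Lat d)
    (hZA : SpansZ a) (hPt : Pointed a) (hNorm : Normal a)
    (F : Set (Fin n)) (hF : IsFace a F) :
    ∀ α : Lat d, α ∈ NAmNF a F ↔
      ∀ G : Set (Fin n), IsFace a G → F ⊆ G → dimF a G = d - 1 →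
        ∀ h : Lat d →ₗ[ℤ] ℤ, IsPISF a G h → 0 ≤ h α :=
  NAmNF_support_function_description_general a hZA hNorm F

end

end GKZ
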